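/- arXiv:2208.04497 — 5 statements merged into one kernel-verified Lean document; each statement's English description precedes it below -/
import Mathlib

section
/- Let N ≥ 1, let λ_1, …, λ_N be distinct complex numbers with Im λ_j > 0 for all j, let w_1, …, w_N be nonzero column vectors in ℂ², and suppose the N×N matrix Ω with entries Ω_{kj} = (w_k† w_j)/(conj(λ_k) − λ_j) is invertible. Define E(λ) = I + Σ_{k,j=1}^N w_k w_j† (Ω⁻¹)_{kj}/(λ − conj(λ_j)). Then for every λ ∈ ℂ with λ ∉ {conj(λ_1), …, conj(λ_N)}, the determinant of E(λ) is the Blaschke-type product det E(λ) = Π_{k=1}^N (λ − λ_k)/(λ − conj(λ_k)). -/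
/-!
With `W` the `2 × N` matrix whose columns are the `w k`, `E z = 1 + W Ω⁻¹ D Wᴴ` where
`D = diag (z - conj λₖ)⁻¹`, and Sylvester's identity `det (1 + AB) = det (1 + BA)` moves the
determinant to `det (1 + Ω⁻¹ D WᴴW)`. The matrix `Ω` is Cauchy-like: it solves the displacement
equation `diag (conj λ) Ω - Ω diag λ = WᴴW`, which gives `Ω + D WᴴW = D Ω diag (z - λ)`, so the
determinant is `det D · det diag (z - λ)`.
-/

open Matrix BigOperators

namespace Matrix

variable {ι m n K : Type*} [Fintype ι]

theorem sum_sum_smul_vecMulVec [Fintype m] [Fintype n] {R : Type*} [CommSemiring R]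
    (C : Matrix ι ι R) (u : ι → m → R) (v : ι → n → R) :
    ∑ k, ∑ j, C k j • vecMulVec (u k) (v j) = (of u)ᵀ * (C * of v) := by
  ext i i'
  simp only [sum_apply, smul_apply, vecMulVec_apply, mul_apply, transpose_apply, of_apply,
    smul_eq_mul, Finset.mul_sum]
  refine Finset.sum_congr rfl fun j _ => Finset.sum_congr rfl fun k _ => ?_
  ring

variable [DecidableEq ι] [Field K]

theorem add_diagonal_inv_sub_mul_of_displacement {Ω G : Matrix ι ι K} {a b : ι → K}
    (hG : diagonal a * Ω - Ω * diagonal b = G) {z : K} (hz : ∀ j, z ≠ a j) :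
    Ω + diagonal (fun k => (z - a k)⁻¹) * G
      = diagonal (fun k => (z - a k)⁻¹) * Ω * diagonal (fun j => z - b j) := by
  subst hG
  ext k j
  have hzk : z - a k ≠ 0 := sub_ne_zero.mpr (hz k)
  simp only [add_apply, mul_sub, sub_apply, mul_diagonal, diagonal_mul]
  field_simp
  ring

theorem det_one_add_mul_inv_mul_diagonal_inv_sub_mul_of_displacement [Fintype m]
    [DecidableEq m] {Ω : Matrix ι ι K} (hΩ : IsUnit Ω.det) (U : Matrix m ι K)
    (V : Matrix ι m K) {a b : ι → K} (hG : diagonal a * Ω - Ω * diagonal b = V * U)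
    {z : K} (hz : ∀ j, z ≠ a j) :
    (1 + U * (Ω⁻¹ * diagonal (fun k => (z - a k)⁻¹) * V)).det
      = ∏ j, (z - b j) / (z - a j) := by
  have h : 1 + Ω⁻¹ * diagonal (fun k => (z - a k)⁻¹) * V * U
      = Ω⁻¹ * (diagonal (fun k => (z - a k)⁻¹) * Ω * diagonal (fun j => z - b j)) := by
    rw [← add_diagonal_inv_sub_mul_of_displacement hG hz, Matrix.mul_add,
      nonsing_inv_mul Ω hΩ]
    simp only [Matrix.mul_assoc]
  rw [det_one_add_mul_comm, h, det_mul, det_mul, det_mul, det_diagonal, det_diagonal]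
  calc Ω⁻¹.det * ((∏ k, (z - a k)⁻¹) * Ω.det * ∏ j, (z - b j))
      = (Ω⁻¹.det * Ω.det) * ∏ j, (z - a j)⁻¹ * (z - b j) := by
        rw [Finset.prod_mul_distrib]; ring
    _ = ∏ j, (z - b j) / (z - a j) := by
        simp only [det_nonsing_inv_mul_det Ω hΩ, one_mul, inv_mul_eq_div]

end Matrix

theorem dressing_factor_det_general
    (N : ℕ)
    (lam : Fin N → ℂ)
    (him : ∀ j, 0 < (lam j).im)
    (w : Fin N → (Fin 2 → ℂ))
    (Ω : Matrix (Fin N) (Fin N) ℂ)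
    (hΩ : ∀ k j, Ω k j = (star (w k) ⬝ᵥ w j) / ((starRingEnd ℂ) (lam k) - lam j))
    (hΩinv : IsUnit Ω.det)
    (E : ℂ → Matrix (Fin 2) (Fin 2) ℂ)
    (hE : ∀ z : ℂ, E z =
      1 + ∑ k, ∑ j, ((Ω⁻¹ k j) / (z - (starRingEnd ℂ) (lam j))) •
        Matrix.vecMulVec (w k) (star (w j)))
    (z : ℂ) (hz : ∀ j, z ≠ (starRingEnd ℂ) (lam j)) :
    (E z).det = ∏ k, (z - lam k) / (z - (starRingEnd ℂ) (lam k)) := by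
  set W : Matrix (Fin 2) (Fin N) ℂ := (of w)ᵀ
  have hdisplacement :
      diagonal (fun k => (starRingEnd ℂ) (lam k)) * Ω - Ω * diagonal lam = Wᴴ * W := by
    ext k j
    have hden : (starRingEnd ℂ) (lam k) - lam j ≠ 0 := fun h => by
      have := congrArg Complex.im h
      simp only [Complex.sub_im, Complex.conj_im, Complex.zero_im] at this
      linarith [him k, him j]
    have hΩkj : Ω k j * ((starRingEnd ℂ) (lam k) - lam j) = star (w k) ⬝ᵥ w j := by
      rw [hΩ, div_mul_cancel₀ _ hden]
    have hgram : (Wᴴ * W) k j = star (w k) ⬝ᵥ w j := rfl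
    simp only [Matrix.sub_apply, diagonal_mul, mul_diagonal, hgram]
    linear_combination hΩkj
  have hEz :
      E z = 1 + W * (Ω⁻¹ * diagonal (fun k => (z - (starRingEnd ℂ) (lam k))⁻¹) * Wᴴ) := by
    rw [hE]
    congr 1
    calc _ = ∑ k, ∑ j, (Ω⁻¹ * diagonal (fun k => (z - (starRingEnd ℂ) (lam k))⁻¹)) k j •
          vecMulVec (w k) (star (w j)) := by
          simp only [mul_diagonal, div_eq_mul_inv]
      _ = _ := by
          rw [sum_sum_smul_vecMulVec]
          rfl
  rw [hEz,
    det_one_add_mul_inv_mul_diagonal_inv_sub_mul_of_displacement hΩinv W Wᴴ hdisplacement hz]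

/-- The determinant of the dressing factor `E(λ)` is the Blaschke-type
product `∏_{k=1}^N (λ - λ_k)/(λ - conj(λ_k))`. -/
theorem dressing_factor_det
    (N : ℕ) (hN : 1 ≤ N)
    (lam : Fin N → ℂ) (hdist : Function.Injective lam)
    (him : ∀ j, 0 < (lam j).im)
    (w : Fin N → (Fin 2 → ℂ)) (hw : ∀ j, w j ≠ 0)
    (Ω : Matrix (Fin N) (Fin N) ℂ)
    (hΩ : ∀ k j, Ω k j = (star (w k) ⬝ᵥ w j) / ((starRingEnd ℂ) (lam k) - lam j))
    (hΩinv : IsUnit Ω.det)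
    (E : ℂ → Matrix (Fin 2) (Fin 2) ℂ)
    (hE : ∀ z : ℂ, E z =
      1 + ∑ k, ∑ j, ((Ω⁻¹ k j) / (z - (starRingEnd ℂ) (lam j))) •
        Matrix.vecMulVec (w k) (star (w j)))
    (z : ℂ) (hz : ∀ j, z ≠ (starRingEnd ℂ) (lam j)) :
    (E z).det = ∏ k, (z - lam k) / (z - (starRingEnd ℂ) (lam k)) :=
  dressing_factor_det_general N lam him w Ω hΩ hΩinv E hE z hz
end

section
/- Let N ≥ 1, let λ_1, …, λ_N be distinct complex numbers with Im λ_j > 0 for all j, let w_1, …, w_N be nonzero column vectors in ℂ², and suppose the N×N matrix Ω with entries Ω_{kj} = (w_k† w_j)/(conj(λ_k) − λ_j) is invertible. Define E(λ) = I + Σ_{k,j=1}^N w_k w_j† (Ω⁻¹)_{kj}/(λ − conj(λ_j)). Then for every index m ∈ {1, …, N}, the vector w_m lies in the kernel of E(λ_m): E(λ_m) w_m = 0. -/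
/-!
Writing `a k = conj λ_k`, `b j = λ_j`, the hypothesis on `Ω` says
`w_j† w_m = (a j - b m) Ω_{jm}`, so the residue of the `(k, j)` term of `E` at `λ_m` applied
to `w_m` is `-(Ω⁻¹)_{kj} Ω_{jm} w_k`. Summing over `j` produces `-(Ω⁻¹ Ω)_{km} w_k = -δ_{km} w_k`,
which cancels the identity term.
-/

open Matrix

variable {ι n 𝕜 : Type*} [Fintype n] [Field 𝕜]

theorem Matrix.sum_sum_smul_vecMulVec_mulVec [Fintype ι] (c : ι → ι → 𝕜) (x y : ι → n → 𝕜)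
    (v : n → 𝕜) :
    (∑ k, ∑ j, c k j • vecMulVec (x k) (y j)) *ᵥ v = ∑ k, (∑ j, c k j * (y j ⬝ᵥ v)) • x k := by
  simp only [sum_mulVec, smul_mulVec, vecMulVec_mulVec, op_smul_eq_smul, smul_smul,
    Finset.sum_smul]

variable {Ω : Matrix ι ι 𝕜} {a b : ι → 𝕜} {u w : ι → n → 𝕜}

/-- The junk value `x / 0 = 0` makes this hold even where `a j = b m`. -/
theorem dotProduct_div_sub_eq_neg (hΩ : ∀ k j, Ω k j = (u k ⬝ᵥ w j) / (a k - b j)) (j m : ι) :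
    (u j ⬝ᵥ w m) / (b m - a j) = -Ω j m := by
  rw [hΩ, ← neg_sub, div_neg]

variable [Fintype ι] [DecidableEq ι]

theorem sum_inv_mul_dotProduct_div_sub (hΩ : ∀ k j, Ω k j = (u k ⬝ᵥ w j) / (a k - b j))
    (hΩinv : IsUnit Ω.det) (k m : ι) :
    ∑ j, Ω⁻¹ k j / (b m - a j) * (u j ⬝ᵥ w m) = -(1 : Matrix ι ι 𝕜) k m := by
  calc ∑ j, Ω⁻¹ k j / (b m - a j) * (u j ⬝ᵥ w m)
      = -∑ j, Ω⁻¹ k j * Ω j m := by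
        simp only [div_mul_eq_mul_div, mul_div_assoc, dotProduct_div_sub_eq_neg hΩ,
          mul_neg, Finset.sum_neg_distrib]
    _ = -(1 : Matrix ι ι 𝕜) k m := by rw [← mul_apply, nonsing_inv_mul Ω hΩinv]

theorem one_add_sum_sum_smul_vecMulVec_mulVec_eq_zero [DecidableEq n]
    (hΩ : ∀ k j, Ω k j = (u k ⬝ᵥ w j) / (a k - b j)) (hΩinv : IsUnit Ω.det) (m : ι) :
    (1 + ∑ k, ∑ j, (Ω⁻¹ k j / (b m - a j)) • vecMulVec (w k) (u j)) *ᵥ w m = 0 := by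
  simp only [add_mulVec, one_mulVec, sum_sum_smul_vecMulVec_mulVec,
    sum_inv_mul_dotProduct_div_sub hΩ hΩinv, one_apply, neg_smul, ite_smul, one_smul,
    zero_smul, Finset.sum_neg_distrib, Finset.sum_ite_eq', Finset.mem_univ, if_true,
    add_neg_cancel]

theorem dressing_factor_kernel_general
    (N : ℕ)
    (lam : Fin N → ℂ)
    (w : Fin N → (Fin 2 → ℂ))
    (Ω : Matrix (Fin N) (Fin N) ℂ)
    (hΩ : ∀ k j, Ω k j = (star (w k) ⬝ᵥ w j) / ((starRingEnd ℂ) (lam k) - lam j))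
    (hΩinv : IsUnit Ω.det)
    (E : ℂ → Matrix (Fin 2) (Fin 2) ℂ)
    (hE : ∀ z : ℂ, E z =
      1 + ∑ k, ∑ j, ((Ω⁻¹ k j) / (z - (starRingEnd ℂ) (lam j))) •
        Matrix.vecMulVec (w k) (star (w j)))
    (m : Fin N) :
    (E (lam m)).mulVec (w m) = 0 := by
  rw [hE]
  exact one_add_sum_sum_smul_vecMulVec_mulVec_eq_zero (u := fun j => star (w j)) hΩ hΩinv m

/-- Each null vector `w_m` lies in the kernel of the dressing factor
evaluated at the corresponding discrete eigenvalue: `E(λ_m) w_m = 0`. -/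
theorem dressing_factor_kernel
    (N : ℕ) (hN : 1 ≤ N)
    (lam : Fin N → ℂ) (hdist : Function.Injective lam)
    (him : ∀ j, 0 < (lam j).im)
    (w : Fin N → (Fin 2 → ℂ)) (hw : ∀ j, w j ≠ 0)
    (Ω : Matrix (Fin N) (Fin N) ℂ)
    (hΩ : ∀ k j, Ω k j = (star (w k) ⬝ᵥ w j) / ((starRingEnd ℂ) (lam k) - lam j))
    (hΩinv : IsUnit Ω.det)
    (E : ℂ → Matrix (Fin 2) (Fin 2) ℂ)
    (hE : ∀ z : ℂ, E z =
      1 + ∑ k, ∑ j, ((Ω⁻¹ k j) / (z - (starRingEnd ℂ) (lam j))) •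
        Matrix.vecMulVec (w k) (star (w j)))
    (m : Fin N) :
    (E (lam m)).mulVec (w m) = 0 :=
  dressing_factor_kernel_general N lam w Ω hΩ hΩinv E hE m
end

section
/- Let u : ℝ → ℝ be continuously differentiable, let λ ∈ ℂ, and let v₁, v₂ : ℝ → ℂ be differentiable functions satisfying the Zakharov–Shabat system v₁′(x) = iλ v₁(x) + u(x) v₂(x), v₂′(x) = −u(x) v₁(x) − iλ v₂(x). Set φ(x) = v₁(x)² + v₂(x)². Assume that (i) 2iλ v₁(x)v₂(x) + u(x)φ(x) → 0 as x → +∞, and (ii) for every x ∈ ℝ the function y ↦ u′(y)φ(y) is integrable on [x, ∞). Then φ is twice differentiable and for every x ∈ ℝ, −φ″(x) − 4u(x)²φ(x) − 4u(x) ∫_x^∞ u′(y)φ(y) dy = 4λ² φ(x); that is, φ is an eigenfunction of the operator L = −∂² − 4u² − 4u ∂₊⁻¹ u_y with eigenvalue 4λ². -/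
/-!
Differentiating with the Zakharov–Shabat system gives `φ' = 2iλ(v₁² − v₂²)` and
`φ'' = −4λ²φ + 8iλ u v₁v₂`. The flux `g = 2iλ v₁v₂ + uφ` satisfies `g' = u'φ`, so the decay
hypothesis turns `∫ₓ^∞ u'φ` into `−g(x)`, and the terms `8iλ u v₁v₂` and `4u²φ` cancel.
-/

open MeasureTheory Filter

def IsZakharovShabatSolution (u : ℝ → ℝ) (lam : ℂ) (v₁ v₂ : ℝ → ℂ) : Prop :=
  ∀ x, HasDerivAt v₁ (Complex.I * lam * v₁ x + u x * v₂ x) x ∧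
    HasDerivAt v₂ (-u x * v₁ x - Complex.I * lam * v₂ x) x

namespace IsZakharovShabatSolution

variable {u : ℝ → ℝ} {lam : ℂ} {v₁ v₂ : ℝ → ℂ}

theorem hasDerivAt_sq_add_sq (h : IsZakharovShabatSolution u lam v₁ v₂) (x : ℝ) :
    HasDerivAt (fun y => v₁ y ^ 2 + v₂ y ^ 2)
      (2 * Complex.I * lam * (v₁ x ^ 2 - v₂ x ^ 2)) x := by
  obtain ⟨h₁, h₂⟩ := h x
  exact ((h₁.fun_pow 2).fun_add (h₂.fun_pow 2)).congr_deriv (by push_cast; ring)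

theorem hasDerivAt_sq_sub_sq (h : IsZakharovShabatSolution u lam v₁ v₂) (x : ℝ) :
    HasDerivAt (fun y => v₁ y ^ 2 - v₂ y ^ 2)
      (2 * Complex.I * lam * (v₁ x ^ 2 + v₂ x ^ 2) + 4 * u x * (v₁ x * v₂ x)) x := by
  obtain ⟨h₁, h₂⟩ := h x
  exact ((h₁.fun_pow 2).fun_sub (h₂.fun_pow 2)).congr_deriv (by push_cast; ring)

theorem hasDerivAt_mul (h : IsZakharovShabatSolution u lam v₁ v₂) (x : ℝ) :
    HasDerivAt (fun y => v₁ y * v₂ y) (u x * (v₂ x ^ 2 - v₁ x ^ 2)) x := by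
  obtain ⟨h₁, h₂⟩ := h x
  exact (h₁.fun_mul h₂).congr_deriv (by ring)

theorem hasDerivAt_flux (h : IsZakharovShabatSolution u lam v₁ v₂) {x : ℝ}
    (hu : DifferentiableAt ℝ u x) :
    HasDerivAt (fun y => 2 * Complex.I * lam * v₁ y * v₂ y + u y * (v₁ y ^ 2 + v₂ y ^ 2))
      (deriv u x * (v₁ x ^ 2 + v₂ x ^ 2)) x := by
  have H := ((h.hasDerivAt_mul x).const_mul (2 * Complex.I * lam)).fun_add
    (hu.hasDerivAt.ofReal_comp.fun_mul (h.hasDerivAt_sq_add_sq x))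
  simp only [← mul_assoc] at H
  exact H.congr_deriv (by ring)

end IsZakharovShabatSolution

/-- The square `φ = v₁² + v₂²` of a Zakharov–Shabat eigenfunction
is an eigenfunction of the squared-eigenfunction operator
`L = -∂² - 4u² - 4u ∂₊⁻¹ u_y` with eigenvalue `4λ²`. -/
theorem squared_eigenfunction
    (u : ℝ → ℝ) (hu : ContDiff ℝ 1 u)
    (lam : ℂ)
    (v₁ v₂ : ℝ → ℂ) (hv₁ : Differentiable ℝ v₁) (hv₂ : Differentiable ℝ v₂)
    (heq₁ : ∀ x, deriv v₁ x = Complex.I * lam * v₁ x + (u x : ℂ) * v₂ x)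
    (heq₂ : ∀ x, deriv v₂ x = -(u x : ℂ) * v₁ x - Complex.I * lam * v₂ x)
    (φ : ℝ → ℂ) (hφ : ∀ x, φ x = (v₁ x) ^ 2 + (v₂ x) ^ 2)
    (hdecay : Tendsto (fun x => 2 * Complex.I * lam * v₁ x * v₂ x + (u x : ℂ) * φ x)
      atTop (nhds 0))
    (hint : ∀ x : ℝ, IntegrableOn (fun y => ((deriv u y : ℝ) : ℂ) * φ y) (Set.Ici x)) :
    Differentiable ℝ φ ∧ Differentiable ℝ (deriv φ) ∧
    ∀ x : ℝ,
      -(deriv (deriv φ) x) - 4 * (u x : ℂ) ^ 2 * φ x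
        - 4 * (u x : ℂ) * ∫ y in Set.Ici x, ((deriv u y : ℝ) : ℂ) * φ y
      = 4 * lam ^ 2 * φ x := by
  have hzs : IsZakharovShabatSolution u lam v₁ v₂ := fun x =>
    ⟨heq₁ x ▸ (hv₁ x).hasDerivAt, heq₂ x ▸ (hv₂ x).hasDerivAt⟩
  obtain rfl : φ = fun x => v₁ x ^ 2 + v₂ x ^ 2 := funext hφ
  have hφ' : deriv (fun x => v₁ x ^ 2 + v₂ x ^ 2) =
      fun x => 2 * Complex.I * lam * (v₁ x ^ 2 - v₂ x ^ 2) :=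
    funext fun x => (hzs.hasDerivAt_sq_add_sq x).deriv
  have hφ'' x := (hzs.hasDerivAt_sq_sub_sq x).const_mul (2 * Complex.I * lam)
  rw [← hφ'] at hφ''
  refine ⟨fun x => (hzs.hasDerivAt_sq_add_sq x).differentiableAt,
    fun x => (hφ'' x).differentiableAt, fun x => ?_⟩
  have hflux : ∫ y in Set.Ici x, ((deriv u y : ℝ) : ℂ) * (v₁ y ^ 2 + v₂ y ^ 2) =
      -(2 * Complex.I * lam * v₁ x * v₂ x + u x * (v₁ x ^ 2 + v₂ x ^ 2)) := by
    rw [integral_Ici_eq_integral_Ioi, integral_Ioi_of_hasDerivAt_of_tendsto'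
      (fun y _ => hzs.hasDerivAt_flux (hu.differentiable one_ne_zero y))
      ((hint x).mono_set Set.Ioi_subset_Ici_self) hdecay, zero_sub]
  beta_reduce
  rw [hflux, (hφ'' x).deriv]
  linear_combination (-4 * lam ^ 2 * (v₁ x ^ 2 + v₂ x ^ 2)) * Complex.I_sq
end

section
/- Let u : ℝ → ℝ be five times continuously differentiable with u(x), u′(x), u″(x) → 0 as x → −∞, and assume that for every x ∈ ℝ the function y ↦ u(y)·(u‴(y) + 6u(y)²u′(y)) is integrable on (−∞, x]. Set g = u‴ + 6u²u′. Then for every x ∈ ℝ, g″(x) + 4u(x)²g(x) + 4u′(x) ∫_{−∞}^x u(y) g(y) dy = u⁽⁵⁾(x) + 10·(u²u″ + u(u′)²)′(x) + 30u(x)⁴u′(x); that is, L̂²u_x = ∂_x K₅[u] where ∂_x K₅[u] = u_xxxxx + 10(u²u_xx + u u_x²)_x + 30u⁴u_x. -/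
open MeasureTheory Filter Set Topology

/-!
The only nonlocal term is `∫_{-∞}^x u g`. Its integrand is an exact derivative,
`u (u''' + 6u²u') = (u u'' - u'²/2 + 3u⁴/2)'`, and the primitive vanishes at `-∞` because
`u, u', u''` do; so the integral equals `u u'' - u'²/2 + 3u⁴/2` at `x`. After differentiating
`g` twice, both sides are polynomials in `u, …, u⁽⁵⁾` and agree.
-/

theorem ContDiff.hasDerivAt_iteratedDeriv {n : WithTop ℕ∞} {u : ℝ → ℝ} (hu : ContDiff ℝ n u)
    {k : ℕ} (hk : (k : WithTop ℕ∞) < n) (x : ℝ) :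
    HasDerivAt (iteratedDeriv k u) (iteratedDeriv (k + 1) u x) x := by
  rw [iteratedDeriv_succ]
  exact (hu.differentiable_iteratedDeriv k hk x).hasDerivAt

theorem ContDiff.hasDerivAt_deriv {n : WithTop ℕ∞} {u : ℝ → ℝ} (hu : ContDiff ℝ n u)
    (hn : 2 ≤ n) (x : ℝ) : HasDerivAt (deriv u) (iteratedDeriv 2 u x) x := by
  simpa only [iteratedDeriv_one] using
    hu.hasDerivAt_iteratedDeriv (k := 1) (lt_of_lt_of_le (by norm_num) hn) x

namespace MKdV

variable {u : ℝ → ℝ}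

noncomputable def derivK3 (u : ℝ → ℝ) (x : ℝ) : ℝ :=
  iteratedDeriv 3 u x + 6 * u x ^ 2 * deriv u x

noncomputable def primitiveMulDerivK3 (u : ℝ → ℝ) (x : ℝ) : ℝ :=
  u x * iteratedDeriv 2 u x - deriv u x ^ 2 / 2 + 3 / 2 * u x ^ 4

theorem hasDerivAt_primitiveMulDerivK3 (hu : ContDiff ℝ 3 u) (x : ℝ) :
    HasDerivAt (primitiveMulDerivK3 u) (u x * derivK3 u x) x := by
  have h0 := (hu.differentiable (by norm_num) x).hasDerivAt
  have h1 := hu.hasDerivAt_deriv (by norm_num) x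
  have h2 := hu.hasDerivAt_iteratedDeriv (k := 2) (by norm_num) x
  refine (((h0.mul h2).sub ((h1.pow 2).div_const 2)).add
    ((h0.pow 4).const_mul (3 / 2))).congr_deriv ?_
  simp only [derivK3, Nat.reduceAdd, Nat.cast_ofNat]
  ring

theorem tendsto_primitiveMulDerivK3_atBot (h0 : Tendsto u atBot (𝓝 0))
    (h1 : Tendsto (deriv u) atBot (𝓝 0)) (h2 : Tendsto (iteratedDeriv 2 u) atBot (𝓝 0)) :
    Tendsto (primitiveMulDerivK3 u) atBot (𝓝 0) := by
  have h : Tendsto (primitiveMulDerivK3 u) atBot (𝓝 (0 * 0 - 0 ^ 2 / 2 + 3 / 2 * 0 ^ 4)) :=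
    ((h0.mul h2).sub ((h1.pow 2).div_const 2)).add ((h0.pow 4).const_mul (3 / 2))
  simpa using h

theorem integral_Iic_mul_derivK3 (hu : ContDiff ℝ 3 u) (h0 : Tendsto u atBot (𝓝 0))
    (h1 : Tendsto (deriv u) atBot (𝓝 0)) (h2 : Tendsto (iteratedDeriv 2 u) atBot (𝓝 0))
    {x : ℝ} (hint : IntegrableOn (fun y => u y * derivK3 u y) (Iic x)) :
    ∫ y in Iic x, u y * derivK3 u y = primitiveMulDerivK3 u x := by
  rw [integral_Iic_of_hasDerivAt_of_tendsto' (fun y _ => hasDerivAt_primitiveMulDerivK3 hu y)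
    hint (tendsto_primitiveMulDerivK3_atBot h0 h1 h2), sub_zero]

theorem hasDerivAt_derivK3 (hu : ContDiff ℝ 4 u) (x : ℝ) :
    HasDerivAt (derivK3 u)
      (iteratedDeriv 4 u x + 12 * u x * deriv u x ^ 2 + 6 * u x ^ 2 * iteratedDeriv 2 u x) x := by
  have h0 := (hu.differentiable (by norm_num) x).hasDerivAt
  have h1 := hu.hasDerivAt_deriv (by norm_num) x
  have h3 := hu.hasDerivAt_iteratedDeriv (k := 3) (by norm_num) x
  refine (h3.add (((h0.pow 2).const_mul 6).mul h1)).congr_deriv ?_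
  simp only [Pi.pow_apply, Nat.reduceAdd, Nat.cast_ofNat]
  ring

theorem deriv_deriv_derivK3 (hu : ContDiff ℝ 5 u) (x : ℝ) :
    deriv (deriv (derivK3 u)) x
      = iteratedDeriv 5 u x + 12 * deriv u x ^ 3 + 36 * u x * deriv u x * iteratedDeriv 2 u x
        + 6 * u x ^ 2 * iteratedDeriv 3 u x := by
  have hderiv : deriv (derivK3 u) = fun x => iteratedDeriv 4 u x
      + 12 * u x * deriv u x ^ 2 + 6 * u x ^ 2 * iteratedDeriv 2 u x :=
    funext fun x => (hasDerivAt_derivK3 (hu.of_le (by norm_num)) x).deriv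
  have h0 := (hu.differentiable (by norm_num) x).hasDerivAt
  have h1 := hu.hasDerivAt_deriv (by norm_num) x
  have h2 := hu.hasDerivAt_iteratedDeriv (k := 2) (by norm_num) x
  have h4 := hu.hasDerivAt_iteratedDeriv (k := 4) (by norm_num) x
  rw [hderiv]
  refine ((h4.add ((h0.const_mul 12).mul (h1.pow 2))).add
    ((h0.pow 2).const_mul 6 |>.mul h2)).deriv.trans ?_
  simp only [Pi.pow_apply, Nat.reduceAdd, Nat.cast_ofNat]
  ring

theorem deriv_K5_nonlinearity (hu : ContDiff ℝ 3 u) (x : ℝ) :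
    deriv (fun z => u z ^ 2 * iteratedDeriv 2 u z + u z * deriv u z ^ 2) x
      = 4 * u x * deriv u x * iteratedDeriv 2 u x + u x ^ 2 * iteratedDeriv 3 u x
        + deriv u x ^ 3 := by
  have h0 := (hu.differentiable (by norm_num) x).hasDerivAt
  have h1 := hu.hasDerivAt_deriv (by norm_num) x
  have h2 := hu.hasDerivAt_iteratedDeriv (k := 2) (by norm_num) x
  refine (((h0.pow 2).mul h2).add (h0.mul (h1.pow 2))).deriv.trans ?_
  simp only [Pi.pow_apply, Nat.reduceAdd, Nat.cast_ofNat]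
  ring

end MKdV

open MKdV in
/-- The recursion operator identity `L̂² u_x = ∂_x K₅[u]`: with
`g = u''' + 6u²u'`, one has
`g'' + 4u²g + 4u' ∫_{-∞}^x u g = u⁽⁵⁾ + 10(u²u'' + u(u')²)' + 30u⁴u'`. -/
theorem recursion_operator_K5
    (u : ℝ → ℝ) (hu : ContDiff ℝ 5 u)
    (hdecay₀ : Tendsto u atBot (nhds 0))
    (hdecay₁ : Tendsto (deriv u) atBot (nhds 0))
    (hdecay₂ : Tendsto (iteratedDeriv 2 u) atBot (nhds 0))
    (g : ℝ → ℝ)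
    (hg : ∀ x, g x = iteratedDeriv 3 u x + 6 * (u x) ^ 2 * deriv u x)
    (hint : ∀ x : ℝ, IntegrableOn (fun y => u y * g y) (Set.Iic x)) :
    ∀ x : ℝ,
      deriv (deriv g) x + 4 * (u x) ^ 2 * g x
        + 4 * deriv u x * ∫ y in Set.Iic x, u y * g y
      = iteratedDeriv 5 u x
        + 10 * deriv (fun z => (u z) ^ 2 * iteratedDeriv 2 u z + u z * (deriv u z) ^ 2) x
        + 30 * (u x) ^ 4 * deriv u x := by
  obtain rfl : g = derivK3 u := funext hg
  intro x
  have hu₃ : ContDiff ℝ 3 u := hu.of_le (by norm_num)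
  rw [deriv_deriv_derivK3 hu, integral_Iic_mul_derivK3 hu₃ hdecay₀ hdecay₁ hdecay₂ (hint x),
    deriv_K5_nonlinearity hu₃]
  simp only [derivK3, primitiveMulDerivK3]
  ring
end

section
/- Let u : ℝ → ℝ be seven times continuously differentiable with u(x) and its derivatives up to fourth order tending to 0 as x → −∞, and assume that for every x ∈ ℝ the function y ↦ u(y)·(∂_yK₅[u])(y) is integrable on (−∞, x], where ∂_xK₅[u] = u_xxxxx + 10(u²u_xx + u u_x²)_x + 30u⁴u_x. Set g = ∂_xK₅[u]. Then for every x ∈ ℝ, g″(x) + 4u(x)²g(x) + 4u′(x) ∫_{−∞}^x u(y) g(y) dy = ∂_x K₇[u](x), where K₇[u] = u_{6x} + 14(u²u_{4x} + 4u u_x u_xxx + 3u u_xx² + 5u_x²u_xx + 5u⁴u_xx + 10u³u_x²) + 20u⁷; that is, (−L̂)(∂_x K₅[u]) = ∂_x K₇[u], so −L̂³u_x = ∂_x K₇[u]. -/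
open MeasureTheory Filter

/-!
The key identity is `K₇[u] = ∂ₓ(∂ₓK₅[u]) + 4u · ∂₋⁻¹(u ∂ₓK₅[u])`, in which `u ∂ₓK₅[u]` is an exact
derivative with an explicit polynomial primitive `P` in the jet `u, …, u⁽⁴⁾`, so `P` vanishes
at `-∞` and `∂₋⁻¹(u ∂ₓK₅[u]) = P`. Differentiating the key identity gives
`∂ₓK₇ = g'' + 4u'P + 4u²g`, which is `(-L̂) g` for `g = ∂ₓK₅[u]`.
-/

section Differentiability

variable {𝕜 F : Type*} [NontriviallyNormedField 𝕜] [NormedAddCommGroup F] [NormedSpace 𝕜 F]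
  {f : 𝕜 → F} {n : WithTop ℕ∞} {x : 𝕜}

@[fun_prop]
theorem ContDiff.differentiableAt (h : ContDiff 𝕜 n f) (hn : n ≠ 0) : DifferentiableAt 𝕜 f x :=
  (h.differentiable hn).differentiableAt

@[fun_prop]
theorem ContDiff.differentiableAt_iteratedDeriv (k : ℕ) (h : ContDiff 𝕜 n f) (hk : k < n) :
    DifferentiableAt 𝕜 (iteratedDeriv k f) x :=
  (h.differentiable_iteratedDeriv k hk).differentiableAt

@[fun_prop]
theorem ContDiff.differentiableAt_deriv (h : ContDiff 𝕜 n f) (hn : 1 < n) :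
    DifferentiableAt 𝕜 (deriv f) x := by
  simpa using h.differentiableAt_iteratedDeriv 1 hn (x := x)

theorem deriv_deriv_eq_iteratedDeriv_two (f : 𝕜 → F) : deriv (deriv f) = iteratedDeriv 2 f := by
  rw [iteratedDeriv_succ, iteratedDeriv_one]

end Differentiability

namespace MKdV

-- `flow5 u` is `∂ₓK₅[u]` and `K7 u` is `K₇[u]`.
noncomputable def flow5 (u : ℝ → ℝ) (x : ℝ) : ℝ :=
  iteratedDeriv 5 u x
    + 10 * deriv (fun z => u z ^ 2 * iteratedDeriv 2 u z + u z * deriv u z ^ 2) x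
    + 30 * u x ^ 4 * deriv u x

noncomputable def K7 (u : ℝ → ℝ) (x : ℝ) : ℝ :=
  iteratedDeriv 6 u x
    + 14 * (u x ^ 2 * iteratedDeriv 4 u x
      + 4 * u x * deriv u x * iteratedDeriv 3 u x
      + 3 * u x * iteratedDeriv 2 u x ^ 2
      + 5 * deriv u x ^ 2 * iteratedDeriv 2 u x
      + 5 * u x ^ 4 * iteratedDeriv 2 u x
      + 10 * u x ^ 3 * deriv u x ^ 2)
    + 20 * u x ^ 7

noncomputable def flow5Primitive (u : ℝ → ℝ) (x : ℝ) : ℝ :=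
  u x * iteratedDeriv 4 u x - deriv u x * iteratedDeriv 3 u x + iteratedDeriv 2 u x ^ 2 / 2
    + 10 * u x ^ 3 * iteratedDeriv 2 u x + 5 * u x ^ 2 * deriv u x ^ 2 + 5 * u x ^ 6

variable {u : ℝ → ℝ}

theorem flow5_eq (hu : ContDiff ℝ 3 u) :
    flow5 u = fun x => iteratedDeriv 5 u x + 10 * u x ^ 2 * iteratedDeriv 3 u x
      + 40 * u x * deriv u x * iteratedDeriv 2 u x + 10 * deriv u x ^ 3
      + 30 * u x ^ 4 * deriv u x := by
  funext x
  simp (disch := fun_prop (disch := norm_num)) only [flow5, deriv_fun_add, deriv_fun_mul,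
    deriv_fun_pow, ← iteratedDeriv_succ, deriv_deriv_eq_iteratedDeriv_two]
  ring

theorem deriv_flow5 (hu : ContDiff ℝ 6 u) :
    deriv (flow5 u) = fun x => iteratedDeriv 6 u x + 10 * u x ^ 2 * iteratedDeriv 4 u x
      + 60 * u x * deriv u x * iteratedDeriv 3 u x + 70 * deriv u x ^ 2 * iteratedDeriv 2 u x
      + 40 * u x * iteratedDeriv 2 u x ^ 2 + 120 * u x ^ 3 * deriv u x ^ 2
      + 30 * u x ^ 4 * iteratedDeriv 2 u x := by
  rw [flow5_eq (hu.of_le (by norm_num))]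
  funext x
  simp (disch := fun_prop (disch := norm_num)) only [deriv_fun_add, deriv_fun_mul,
    deriv_fun_pow, deriv_const, ← iteratedDeriv_succ, deriv_deriv_eq_iteratedDeriv_two]
  ring

theorem hasDerivAt_flow5Primitive (hu : ContDiff ℝ 5 u) (x : ℝ) :
    HasDerivAt (flow5Primitive u) (u x * flow5 u x) x := by
  have hdiff : DifferentiableAt ℝ (flow5Primitive u) x := by
    unfold flow5Primitive
    fun_prop (disch := norm_num)
  refine hdiff.hasDerivAt.congr_deriv ?_
  rw [flow5_eq (hu.of_le (by norm_num))]
  unfold flow5Primitive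
  simp (disch := fun_prop (disch := norm_num)) only [deriv_fun_add, deriv_fun_sub,
    deriv_fun_mul, deriv_fun_pow, deriv_const, deriv_div_const, ← iteratedDeriv_succ,
    deriv_deriv_eq_iteratedDeriv_two]
  ring

theorem tendsto_flow5Primitive_atBot
    (hdecay : ∀ k : ℕ, k ≤ 4 → Tendsto (iteratedDeriv k u) atBot (nhds 0)) :
    Tendsto (flow5Primitive u) atBot (nhds 0) := by
  have t0 : Tendsto u atBot (nhds 0) := by simpa using hdecay 0 (by norm_num)
  have t1 : Tendsto (deriv u) atBot (nhds 0) := by simpa using hdecay 1 (by norm_num)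
  have t2 := hdecay 2 (by norm_num)
  have t3 := hdecay 3 (by norm_num)
  have t4 := hdecay 4 (by norm_num)
  unfold flow5Primitive
  have := (((((t0.mul t4).sub (t1.mul t3)).add ((t2.pow 2).div_const 2)).add
    (((t0.pow 3).const_mul 10).mul t2)).add (((t0.pow 2).const_mul 5).mul (t1.pow 2))).add
    ((t0.pow 6).const_mul 5)
  simpa using this

theorem integral_Iic_mul_flow5 (hu : ContDiff ℝ 5 u)
    (hdecay : ∀ k : ℕ, k ≤ 4 → Tendsto (iteratedDeriv k u) atBot (nhds 0)) {x : ℝ}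
    (hint : IntegrableOn (fun y => u y * flow5 u y) (Set.Iic x)) :
    ∫ y in Set.Iic x, u y * flow5 u y = flow5Primitive u x := by
  rw [integral_Iic_of_hasDerivAt_of_tendsto' (fun y _ => hasDerivAt_flow5Primitive hu y) hint
    (tendsto_flow5Primitive_atBot hdecay), sub_zero]

theorem K7_eq (hu : ContDiff ℝ 6 u) :
    K7 u = fun x => deriv (flow5 u) x + 4 * u x * flow5Primitive u x := by
  rw [deriv_flow5 hu]
  funext x
  simp only [K7, flow5Primitive]
  ring

theorem hasDerivAt_K7 (hu : ContDiff ℝ 7 u) (x : ℝ) :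
    HasDerivAt (K7 u) (deriv (deriv (flow5 u)) x + 4 * u x ^ 2 * flow5 u x
      + 4 * deriv u x * flow5Primitive u x) x := by
  have hdd : DifferentiableAt ℝ (deriv (flow5 u)) x := by
    rw [deriv_flow5 (hu.of_le (by norm_num))]
    fun_prop (disch := norm_num)
  have hu' : HasDerivAt u (deriv u x) x := (hu.differentiableAt (by norm_num)).hasDerivAt
  rw [K7_eq (hu.of_le (by norm_num))]
  refine (hdd.hasDerivAt.add ((hu'.const_mul 4).mul
    (hasDerivAt_flow5Primitive (hu.of_le (by norm_num)) x))).congr_deriv ?_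
  ring

end MKdV

/-- The recursion operator identity `(-L̂)(∂_x K₅[u]) = ∂_x K₇[u]`:
with `g = ∂_x K₅[u] = u⁽⁵⁾ + 10(u²u'' + u(u')²)' + 30u⁴u'`, one has
`g'' + 4u²g + 4u' ∫_{-∞}^x u g = ∂_x K₇[u]`, where
`K₇[u] = u⁽⁶⁾ + 14(u²u⁽⁴⁾ + 4uu'u''' + 3u(u'')² + 5(u')²u'' + 5u⁴u'' + 10u³(u')²) + 20u⁷`. -/
theorem recursion_operator_K7
    (u : ℝ → ℝ) (hu : ContDiff ℝ 7 u)
    (hdecay : ∀ k : ℕ, k ≤ 4 → Tendsto (iteratedDeriv k u) atBot (nhds 0))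
    (g : ℝ → ℝ)
    (hg : ∀ x, g x = iteratedDeriv 5 u x
      + 10 * deriv (fun z => (u z) ^ 2 * iteratedDeriv 2 u z + u z * (deriv u z) ^ 2) x
      + 30 * (u x) ^ 4 * deriv u x)
    (hint : ∀ x : ℝ, IntegrableOn (fun y => u y * g y) (Set.Iic x))
    (K₇ : ℝ → ℝ)
    (hK₇ : ∀ x, K₇ x = iteratedDeriv 6 u x
      + 14 * ((u x) ^ 2 * iteratedDeriv 4 u x
        + 4 * u x * deriv u x * iteratedDeriv 3 u x
        + 3 * u x * (iteratedDeriv 2 u x) ^ 2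
        + 5 * (deriv u x) ^ 2 * iteratedDeriv 2 u x
        + 5 * (u x) ^ 4 * iteratedDeriv 2 u x
        + 10 * (u x) ^ 3 * (deriv u x) ^ 2)
      + 20 * (u x) ^ 7) :
    ∀ x : ℝ,
      deriv (deriv g) x + 4 * (u x) ^ 2 * g x
        + 4 * deriv u x * ∫ y in Set.Iic x, u y * g y
      = deriv K₇ x := by
  obtain rfl : g = MKdV.flow5 u := funext hg
  obtain rfl : K₇ = MKdV.K7 u := funext hK₇
  intro x
  rw [MKdV.integral_Iic_mul_flow5 (hu.of_le (by norm_num)) hdecay (hint x),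
    (MKdV.hasDerivAt_K7 hu x).deriv]
end
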